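/- arXiv:1207.5258 — 2 statements merged into one kernel-verified Lean document; each statement's English description precedes it below -/
import Mathlib

section
/- Let n ≤ m and let L, M ⊆ ℝⁿ be absolutely permutation-invariant sets, and let V ⊇ L and U ⊇ M be open absolutely permutation-invariant sets such that for all x ∈ V ∩ U the set equality P_L(x) = ⋃_{z∈P_M(x)} P_L(z) holds. Define the lifts Σ(S) := {A·(Diag s)·Bᵀ : A ∈ O(n), B ∈ O(m), s ∈ S} for S ∈ {L, M, V, U}, sets of real n×m matrices with the Frobenius norm. Suppose X ∈ Σ(V) ∩ Σ(U) is such that P_{Σ(M)}(X) = {Z} is a singleton, P_{Σ(L)}(X) = {W} is a singleton, and P_{Σ(L)}(Z) = {W'} is a singleton. Then W = W'. -/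
open Matrix

noncomputable section

/-- The Euclidean norm on `ℝⁿ` (vectors as functions). -/
def vnorm {n : ℕ} (x : Fin n → ℝ) : ℝ := Real.sqrt (∑ i, x i ^ 2)

/-- Euclidean distance from a point to a set in `ℝⁿ`. -/
def vdistSet {n : ℕ} (x : Fin n → ℝ) (Q : Set (Fin n → ℝ)) : ℝ :=
  sInf ((fun y => vnorm (x - y)) '' Q)

/-- The Frobenius norm of a real matrix. -/
def frobNorm {n m : ℕ} (A : Matrix (Fin n) (Fin m) ℝ) : ℝ :=
  Real.sqrt (∑ i, ∑ j, A i j ^ 2)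

/-- Frobenius distance from a matrix to a set of matrices. -/
def frobDistSet {n m : ℕ} (X : Matrix (Fin n) (Fin m) ℝ)
    (S : Set (Matrix (Fin n) (Fin m) ℝ)) : ℝ :=
  sInf ((fun Z => frobNorm (X - Z)) '' S)

/-- The metric projection (set of nearest points) in `ℝⁿ` for the Euclidean norm. -/
def vprojSet {n : ℕ} (S : Set (Fin n → ℝ)) (x : Fin n → ℝ) : Set (Fin n → ℝ) :=
  {y ∈ S | vnorm (x - y) = vdistSet x S}

/-- The metric projection (set of nearest points) for the Frobenius norm on matrices. -/
def mprojSet {n m : ℕ} (S : Set (Matrix (Fin n) (Fin m) ℝ)) (X : Matrix (Fin n) (Fin m) ℝ) :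
    Set (Matrix (Fin n) (Fin m) ℝ) :=
  {Y ∈ S | frobNorm (X - Y) = frobDistSet X S}

/-- `Q ⊆ ℝⁿ` is absolutely permutation-invariant: stable under permutations of coordinates
and coordinate-wise changes of sign. -/
def AbsPermInv {n : ℕ} (Q : Set (Fin n → ℝ)) : Prop :=
  ∀ (π : Equiv.Perm (Fin n)) (e : Fin n → ℝ), (∀ i, e i = 1 ∨ e i = -1) →
    ∀ x ∈ Q, (fun i => e i * x (π i)) ∈ Q

/-- The `n × m` matrix with `(i,i)` entries `s i` and all other entries zero. -/
def rdiag (n m : ℕ) (s : Fin n → ℝ) : Matrix (Fin n) (Fin m) ℝ :=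
  Matrix.of fun i j => if (j : ℕ) = (i : ℕ) then s i else 0

/-- The spectral lift of a set `S ⊆ ℝⁿ` to the `n × m` real matrices. -/
def lift (n m : ℕ) (S : Set (Fin n → ℝ)) : Set (Matrix (Fin n) (Fin m) ℝ) :=
  {A | ∃ (U : Matrix (Fin n) (Fin n) ℝ) (V : Matrix (Fin m) (Fin m) ℝ),
    U * Uᵀ = 1 ∧ V * Vᵀ = 1 ∧ ∃ s ∈ S, A = U * rdiag n m s * Vᵀ}

/-!
Fix `X = A · Diag x · Bᵀ` with `A, B` orthogonal. For any other `Y = C · Diag y · Eᵀ`, expanding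
`‖X - Y‖²` reduces the Mirsky-type bound `‖x - g y‖ ≤ ‖X - Y‖` (for a suitable signed permutation
`g`) to the von Neumann-type bound `tr (X Yᵀ) ≤ ⟨x, g y⟩`. Here `tr (X Yᵀ) = xᵀ c y` where `|c|` is
doubly substochastic; completing it to a doubly stochastic matrix, Birkhoff's theorem bounds the
bilinear form by its value at a permutation matrix.

As the sets are invariant under signed permutations, this gives `d(X, Σ(S)) = d(x, S)`, shows that
`A · Diag s · Bᵀ` is nearest to `X` in `Σ(S)` whenever `s` is nearest to `x` in `S`, and hence that
a unique nearest point of `Σ(S)` is of this form. So `Z = A · Diag z · Bᵀ` with `z ∈ P_M(x)` and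
`W' = A · Diag w · Bᵀ` with `w ∈ P_L(z) ⊆ P_L(x)` by normal flatness, whence `W' ∈ P_Σ(L)(X) = {W}`.
-/

theorem sum_abs_mul_le_one {ι : Type*} [Fintype ι] {f g : ι → ℝ} (hf : ∑ i, f i ^ 2 ≤ 1)
    (hg : ∑ i, g i ^ 2 ≤ 1) : ∑ i, |f i * g i| ≤ 1 := by
  have h : ∀ i, 2 * |f i * g i| ≤ f i ^ 2 + g i ^ 2 := fun i => by
    simpa [abs_mul, mul_assoc] using two_mul_le_add_sq |f i| |g i|
  have := Finset.sum_le_sum fun i (_ : i ∈ Finset.univ) => h i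
  rw [← Finset.mul_sum, Finset.sum_add_distrib] at this
  linarith

theorem Fin.sum_castLE_le_sum {n m : ℕ} (hnm : n ≤ m) {f : Fin m → ℝ} (hf : ∀ j, 0 ≤ f j) :
    ∑ i : Fin n, f (Fin.castLE hnm i) ≤ ∑ j, f j := by
  have := Finset.sum_map Finset.univ (Fin.castLEEmb hnm) f
  simp only [Fin.castLEEmb_apply] at this
  rw [← this]
  exact Finset.sum_le_univ_sum_of_nonneg hf

section Substochastic

variable {ι : Type*} [Fintype ι] [DecidableEq ι]

theorem exists_perm_dotProduct_mulVec_le_of_mem_doublyStochastic {D : Matrix ι ι ℝ}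
    (hD : D ∈ doublyStochastic ℝ ι) (a b : ι → ℝ) :
    ∃ σ : Equiv.Perm ι, a ⬝ᵥ (D *ᵥ b) ≤ a ⬝ᵥ (b ∘ σ) := by
  have hconv : ConvexOn ℝ Set.univ fun M : Matrix ι ι ℝ => a ⬝ᵥ (M *ᵥ b) :=
    ⟨convex_univ, fun M _ N _ p q _ _ _ => le_of_eq <| by
      simp only [add_mulVec, smul_mulVec, dotProduct_add, dotProduct_smul]⟩
  rw [← SetLike.mem_coe, doublyStochastic_eq_convexHull_permMatrix] at hD
  obtain ⟨_, ⟨σ, rfl⟩, hσ⟩ := hconv.exists_ge_of_mem_convexHull (Set.subset_univ _) hD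
  exact ⟨σ, by rwa [permMatrix_mulVec] at hσ⟩

theorem exists_mem_doublyStochastic_ge {d : Matrix ι ι ℝ} (hd : ∀ i j, 0 ≤ d i j)
    (hrow : ∀ i, ∑ j, d i j ≤ 1) (hcol : ∀ j, ∑ i, d i j ≤ 1) :
    ∃ D ∈ doublyStochastic ℝ ι, ∀ i j, d i j ≤ D i j := by
  -- fill the row defects `r` and column defects `s` with the rank-one matrix `r sᵀ / δ`
  set r : ι → ℝ := fun i => 1 - ∑ j, d i j
  set s : ι → ℝ := fun j => 1 - ∑ i, d i j
  set δ : ℝ := ∑ i, r i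
  have hr : ∀ i, 0 ≤ r i := fun i => sub_nonneg.2 (hrow i)
  have hs : ∀ j, 0 ≤ s j := fun j => sub_nonneg.2 (hcol j)
  have hsδ : ∑ j, s j = δ := by
    simp only [s, δ, r, Finset.sum_sub_distrib]
    rw [Finset.sum_comm]
  have hcancel : ∀ t, 0 ≤ t → t ≤ δ → t * δ / δ = t := by
    intro t ht htδ
    rcases eq_or_ne δ 0 with h | h
    · simp [show t = 0 by linarith]
    · field_simp
  set E : Matrix ι ι ℝ := of fun i j => r i * s j / δ
  have hE : ∀ i j, 0 ≤ E i j := fun i j =>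
    div_nonneg (mul_nonneg (hr i) (hs j)) (Finset.sum_nonneg fun i _ => hr i)
  have hErow : ∀ i, ∑ j, E i j = r i := fun i => by
    simp only [E, of_apply, ← Finset.sum_div, ← Finset.mul_sum, hsδ]
    exact hcancel _ (hr i) (Finset.single_le_sum (fun i _ => hr i) (Finset.mem_univ i))
  have hEcol : ∀ j, ∑ i, E i j = s j := fun j => by
    simp only [E, of_apply, ← Finset.sum_div, ← Finset.sum_mul]
    rw [mul_comm]
    exact hcancel _ (hs j) (hsδ ▸ Finset.single_le_sum (fun j _ => hs j) (Finset.mem_univ j))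
  refine ⟨d + E, mem_doublyStochastic_iff_sum.2 ⟨fun i j => ?_, fun i => ?_, fun j => ?_⟩,
    fun i j => ?_⟩
  · exact add_nonneg (hd i j) (hE i j)
  · simp only [Matrix.add_apply, Finset.sum_add_distrib, hErow, r]
    ring
  · simp only [Matrix.add_apply, Finset.sum_add_distrib, hEcol, s]
    ring
  · exact le_add_of_nonneg_right (hE i j)

theorem exists_perm_dotProduct_mulVec_le {a b : ι → ℝ} (ha : ∀ i, 0 ≤ a i) (hb : ∀ i, 0 ≤ b i)
    {d : Matrix ι ι ℝ} (hd : ∀ i j, 0 ≤ d i j)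
    (hrow : ∀ i, ∑ j, d i j ≤ 1) (hcol : ∀ j, ∑ i, d i j ≤ 1) :
    ∃ σ : Equiv.Perm ι, a ⬝ᵥ (d *ᵥ b) ≤ a ⬝ᵥ (b ∘ σ) := by
  obtain ⟨D, hD, hdD⟩ := exists_mem_doublyStochastic_ge hd hrow hcol
  obtain ⟨σ, hσ⟩ := exists_perm_dotProduct_mulVec_le_of_mem_doublyStochastic hD a b
  refine ⟨σ, le_trans ?_ hσ⟩
  simp only [dotProduct, mulVec]
  gcongr with i _ j _
  · exact ha i
  · exact hb j
  · exact hdD i j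

theorem exists_signed_perm_dotProduct_mulVec_le (x y : ι → ℝ) {c : Matrix ι ι ℝ}
    (hrow : ∀ i, ∑ j, |c i j| ≤ 1) (hcol : ∀ j, ∑ i, |c i j| ≤ 1) :
    ∃ (σ : Equiv.Perm ι) (e : ι → ℝ), (∀ i, e i = 1 ∨ e i = -1) ∧
      x ⬝ᵥ (c *ᵥ y) ≤ x ⬝ᵥ fun i => e i * y (σ i) := by
  obtain ⟨σ, hσ⟩ := exists_perm_dotProduct_mulVec_le (a := fun i => |x i|) (b := fun i => |y i|)
    (d := of fun i j => |c i j|) (fun i => abs_nonneg _) (fun i => abs_nonneg _)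
    (fun i j => abs_nonneg _) hrow hcol
  refine ⟨σ, fun i => if 0 ≤ x i * y (σ i) then 1 else -1,
    fun i => by dsimp only; split_ifs <;> simp, ?_⟩
  calc x ⬝ᵥ (c *ᵥ y) ≤ (fun i => |x i|) ⬝ᵥ ((of fun i j => |c i j|) *ᵥ fun i => |y i|) := by
        simp only [dotProduct, mulVec, of_apply, Finset.mul_sum]
        refine Finset.sum_le_sum fun i _ => Finset.sum_le_sum fun j _ => ?_
        rw [← abs_mul, ← abs_mul]
        exact le_abs_self _
    _ ≤ (fun i => |x i|) ⬝ᵥ ((fun i => |y i|) ∘ σ) := hσ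
    _ = x ⬝ᵥ fun i => (if 0 ≤ x i * y (σ i) then 1 else -1) * y (σ i) := by
        refine Finset.sum_congr rfl fun i _ => ?_
        simp only [Function.comp_apply, ← abs_mul]
        split_ifs with h
        · rw [abs_of_nonneg h]; ring
        · rw [abs_of_neg (not_le.1 h)]; ring

end Substochastic

namespace Matrix

theorem sum_sq_row_eq_one {ι : Type*} [Fintype ι] [DecidableEq ι] {P : Matrix ι ι ℝ}
    (hP : P * Pᵀ = 1) (i : ι) : ∑ j, P i j ^ 2 = 1 := by
  simpa [mul_apply, sq] using congrFun (congrFun hP i) i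

theorem sum_sq_col_eq_one {ι : Type*} [Fintype ι] [DecidableEq ι] {P : Matrix ι ι ℝ}
    (hP : P * Pᵀ = 1) (j : ι) : ∑ i, P i j ^ 2 = 1 := by
  simpa [mul_apply, sq] using congrFun (congrFun (mul_eq_one_comm.1 hP : Pᵀ * P = 1) j) j

theorem orthogonal_transpose_mul {ι : Type*} [Fintype ι] [DecidableEq ι] {B E : Matrix ι ι ℝ}
    (hB : B * Bᵀ = 1) (hE : E * Eᵀ = 1) : (Bᵀ * E) * (Bᵀ * E)ᵀ = 1 := by
  rw [transpose_mul, transpose_transpose, Matrix.mul_assoc, ← Matrix.mul_assoc E, hE,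
    Matrix.one_mul, mul_eq_one_comm.1 hB]

theorem trace_sub_mul_transpose_sub {n m : ℕ} (X Y : Matrix (Fin n) (Fin m) ℝ) :
    trace ((X - Y) * (X - Y)ᵀ) = trace (X * Xᵀ) - 2 * trace (X * Yᵀ) + trace (Y * Yᵀ) := by
  have h : trace (Y * Xᵀ) = trace (X * Yᵀ) := by
    rw [← trace_transpose, transpose_mul, transpose_transpose]
  rw [transpose_sub, Matrix.sub_mul, Matrix.mul_sub, Matrix.mul_sub, trace_sub, trace_sub,
    trace_sub, h]
  ring

theorem trace_diagonal_mul_mul_diagonal_mul {ι : Type*} [Fintype ι] [DecidableEq ι]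
    (x y : ι → ℝ) (R Q : Matrix ι ι ℝ) :
    trace (diagonal x * R * diagonal y * Q) = x ⬝ᵥ ((R ⊙ Qᵀ) *ᵥ y) := by
  simp only [trace, diag_apply, mul_apply, diagonal_apply, ite_mul, zero_mul, Finset.sum_ite_eq,
    Finset.mem_univ, ↓reduceIte, mul_ite, mul_zero, Finset.sum_ite_eq', dotProduct, mulVec,
    hadamard, transpose_apply, of_apply, Finset.mul_sum]
  refine Finset.sum_congr rfl fun i _ => Finset.sum_congr rfl fun j _ => ?_
  ring

end Matrix

theorem vnorm_nonneg {n : ℕ} (x : Fin n → ℝ) : 0 ≤ vnorm x := Real.sqrt_nonneg _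

theorem frobNorm_nonneg {n m : ℕ} (X : Matrix (Fin n) (Fin m) ℝ) : 0 ≤ frobNorm X :=
  Real.sqrt_nonneg _

theorem vnorm_sq {n : ℕ} (x : Fin n → ℝ) : vnorm x ^ 2 = x ⬝ᵥ x := by
  rw [vnorm, Real.sq_sqrt (Finset.sum_nonneg fun i _ => sq_nonneg _)]
  simp only [dotProduct, sq]

theorem frobNorm_sq {n m : ℕ} (X : Matrix (Fin n) (Fin m) ℝ) :
    frobNorm X ^ 2 = trace (X * Xᵀ) := by
  rw [frobNorm, Real.sq_sqrt (by positivity)]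
  simp only [trace, diag, mul_apply, transpose_apply, sq]

theorem vdistSet_le {n : ℕ} (x : Fin n → ℝ) {S : Set (Fin n → ℝ)} {y : Fin n → ℝ} (hy : y ∈ S) :
    vdistSet x S ≤ vnorm (x - y) :=
  csInf_le ⟨0, by rintro _ ⟨z, _, rfl⟩; exact vnorm_nonneg _⟩ ⟨y, hy, rfl⟩

theorem rdiag_apply {n m : ℕ} (hnm : n ≤ m) (x : Fin n → ℝ) (i : Fin n) (j : Fin m) :
    rdiag n m x i j = if j = Fin.castLE hnm i then x i else 0 := by
  simp [rdiag, Fin.ext_iff]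

theorem rdiag_sub {n m : ℕ} (x y : Fin n → ℝ) :
    rdiag n m (x - y) = rdiag n m x - rdiag n m y := by
  ext i j
  by_cases h : (j : ℕ) = i <;> simp [rdiag, h]

theorem rdiag_mul_mul_rdiag_transpose {n m : ℕ} (hnm : n ≤ m) (x y : Fin n → ℝ)
    (P : Matrix (Fin m) (Fin m) ℝ) :
    rdiag n m x * P * (rdiag n m y)ᵀ
      = diagonal x * P.submatrix (Fin.castLE hnm) (Fin.castLE hnm) * diagonal y := by
  ext i k
  simp [mul_apply, rdiag_apply hnm, diagonal_apply, ite_mul, mul_ite]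

theorem trace_mul_rdiag_mul_mul_transpose {n m : ℕ} (hnm : n ≤ m) (x y : Fin n → ℝ)
    (A C : Matrix (Fin n) (Fin n) ℝ) (B E : Matrix (Fin m) (Fin m) ℝ) :
    trace (A * rdiag n m x * Bᵀ * (C * rdiag n m y * Eᵀ)ᵀ)
      = x ⬝ᵥ (((Bᵀ * E).submatrix (Fin.castLE hnm) (Fin.castLE hnm) ⊙ (Cᵀ * A)ᵀ) *ᵥ y) := by
  have h : A * rdiag n m x * Bᵀ * (C * rdiag n m y * Eᵀ)ᵀ
      = A * (rdiag n m x * (Bᵀ * E) * (rdiag n m y)ᵀ * Cᵀ) := by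
    simp only [transpose_mul, transpose_transpose, Matrix.mul_assoc]
  rw [h, trace_mul_comm, Matrix.mul_assoc _ Cᵀ A, rdiag_mul_mul_rdiag_transpose hnm,
    trace_diagonal_mul_mul_diagonal_mul]

theorem frobNorm_orthogonal_mul_rdiag_mul {n m : ℕ} (hnm : n ≤ m) {A : Matrix (Fin n) (Fin n) ℝ}
    {B : Matrix (Fin m) (Fin m) ℝ} (hA : A * Aᵀ = 1) (hB : B * Bᵀ = 1) (x : Fin n → ℝ) :
    frobNorm (A * rdiag n m x * Bᵀ) = vnorm x := by
  rw [← pow_left_inj₀ (frobNorm_nonneg _) (vnorm_nonneg x) two_ne_zero, frobNorm_sq, vnorm_sq,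
    trace_mul_rdiag_mul_mul_transpose hnm, mul_eq_one_comm.1 hA, mul_eq_one_comm.1 hB,
    submatrix_one _ (Fin.castLE_injective hnm)]
  simp [hadamard_one]

theorem exists_signed_perm_trace_le {n m : ℕ} (hnm : n ≤ m) {A C : Matrix (Fin n) (Fin n) ℝ}
    {B E : Matrix (Fin m) (Fin m) ℝ} (hA : A * Aᵀ = 1) (hB : B * Bᵀ = 1) (hC : C * Cᵀ = 1)
    (hE : E * Eᵀ = 1) (x y : Fin n → ℝ) :
    ∃ (σ : Equiv.Perm (Fin n)) (e : Fin n → ℝ), (∀ i, e i = 1 ∨ e i = -1) ∧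
      trace (A * rdiag n m x * Bᵀ * (C * rdiag n m y * Eᵀ)ᵀ) ≤ x ⬝ᵥ fun i => e i * y (σ i) := by
  -- the coefficient matrix `P ⊙ Qᵀ` is doubly substochastic in absolute value, since `P` is a
  -- block of the orthogonal matrix `Bᵀ E` and `Q = Cᵀ A` is orthogonal
  have hP := orthogonal_transpose_mul hB hE
  have hQ := orthogonal_transpose_mul hC hA
  rw [trace_mul_rdiag_mul_mul_transpose hnm]
  refine exists_signed_perm_dotProduct_mulVec_le x y (fun i => ?_) (fun j => ?_)
  · exact sum_abs_mul_le_one ((Fin.sum_castLE_le_sum hnm fun _ => sq_nonneg _).trans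
      (sum_sq_row_eq_one hP _).le) (sum_sq_col_eq_one hQ i).le
  · exact sum_abs_mul_le_one ((Fin.sum_castLE_le_sum hnm fun _ => sq_nonneg _).trans
      (sum_sq_col_eq_one hP _).le) (sum_sq_row_eq_one hQ j).le

theorem exists_signed_perm_vnorm_sub_le {n m : ℕ} (hnm : n ≤ m) {A C : Matrix (Fin n) (Fin n) ℝ}
    {B E : Matrix (Fin m) (Fin m) ℝ} (hA : A * Aᵀ = 1) (hB : B * Bᵀ = 1) (hC : C * Cᵀ = 1)
    (hE : E * Eᵀ = 1) (x y : Fin n → ℝ) :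
    ∃ (σ : Equiv.Perm (Fin n)) (e : Fin n → ℝ), (∀ i, e i = 1 ∨ e i = -1) ∧
      vnorm (x - fun i => e i * y (σ i))
        ≤ frobNorm (A * rdiag n m x * Bᵀ - C * rdiag n m y * Eᵀ) := by
  obtain ⟨σ, e, he, htr⟩ := exists_signed_perm_trace_le hnm hA hB hC hE x y
  refine ⟨σ, e, he, ?_⟩
  set z : Fin n → ℝ := fun i => e i * y (σ i)
  have hz : z ⬝ᵥ z = y ⬝ᵥ y := by
    have he2 : ∀ i, e i * e i = 1 := fun i => by rcases he i with h | h <;> simp [h]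
    calc z ⬝ᵥ z = ∑ i, y (σ i) * y (σ i) :=
          Finset.sum_congr rfl fun i _ => by
            simp only [z]; linear_combination (y (σ i) * y (σ i)) * he2 i
      _ = y ⬝ᵥ y := Equiv.sum_comp σ fun i => y i * y i
  rw [← pow_le_pow_iff_left₀ (vnorm_nonneg _) (frobNorm_nonneg _) two_ne_zero, frobNorm_sq,
    trace_sub_mul_transpose_sub, ← frobNorm_sq, ← frobNorm_sq,
    frobNorm_orthogonal_mul_rdiag_mul hnm hA hB, frobNorm_orthogonal_mul_rdiag_mul hnm hC hE,
    vnorm_sq, vnorm_sq, vnorm_sq, sub_dotProduct, dotProduct_sub, dotProduct_sub, hz,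
    dotProduct_comm z x]
  linarith

section Lift

variable {n m : ℕ} (hnm : n ≤ m) {S : Set (Fin n → ℝ)} {A : Matrix (Fin n) (Fin n) ℝ}
  {B : Matrix (Fin m) (Fin m) ℝ} (hA : A * Aᵀ = 1) (hB : B * Bᵀ = 1)
include hnm hA hB

theorem frobNorm_orthogonal_mul_rdiag_mul_sub (x y : Fin n → ℝ) :
    frobNorm (A * rdiag n m x * Bᵀ - A * rdiag n m y * Bᵀ) = vnorm (x - y) := by
  rw [← Matrix.sub_mul, ← Matrix.mul_sub, ← rdiag_sub, frobNorm_orthogonal_mul_rdiag_mul hnm hA hB]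

theorem mem_of_orthogonal_mul_rdiag_mul_mem_lift (hS : AbsPermInv S) {x : Fin n → ℝ}
    (h : A * rdiag n m x * Bᵀ ∈ lift n m S) : x ∈ S := by
  obtain ⟨C, E, hC, hE, y, hy, hxy⟩ := h
  obtain ⟨σ, e, he, hle⟩ := exists_signed_perm_vnorm_sub_le hnm hA hB hC hE x y
  rw [← hxy, sub_self] at hle
  have h0 : vnorm (x - fun i => e i * y (σ i)) = 0 :=
    le_antisymm (hle.trans_eq (by simp [frobNorm])) (vnorm_nonneg _)
  have hx : x = fun i => e i * y (σ i) := by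
    have := vnorm_sq (x - fun i => e i * y (σ i))
    rwa [h0, eq_comm, zero_pow two_ne_zero, dotProduct_self_eq_zero, sub_eq_zero] at this
  exact hx ▸ hS σ e he y hy

theorem frobDistSet_orthogonal_mul_rdiag_mul_lift (hS : AbsPermInv S) (x : Fin n → ℝ) :
    frobDistSet (A * rdiag n m x * Bᵀ) (lift n m S) = vdistSet x S := by
  apply csInf_eq_csInf_of_forall_exists_le
  · rintro _ ⟨_, ⟨C, E, hC, hE, y, hy, rfl⟩, rfl⟩
    obtain ⟨σ, e, he, hle⟩ := exists_signed_perm_vnorm_sub_le hnm hA hB hC hE x y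
    exact ⟨_, ⟨_, hS σ e he y hy, rfl⟩, hle⟩
  · rintro _ ⟨s, hs, rfl⟩
    exact ⟨_, ⟨_, ⟨A, B, hA, hB, s, hs, rfl⟩, rfl⟩,
      (frobNorm_orthogonal_mul_rdiag_mul_sub hnm hA hB x s).le⟩

theorem orthogonal_mul_rdiag_mul_mem_mprojSet_lift (hS : AbsPermInv S) {x s : Fin n → ℝ}
    (hs : s ∈ vprojSet S x) :
    A * rdiag n m s * Bᵀ ∈ mprojSet (lift n m S) (A * rdiag n m x * Bᵀ) :=
  ⟨⟨A, B, hA, hB, s, hs.1, rfl⟩, by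
    rw [frobNorm_orthogonal_mul_rdiag_mul_sub hnm hA hB, hs.2,
      frobDistSet_orthogonal_mul_rdiag_mul_lift hnm hA hB hS]⟩

theorem exists_mem_vprojSet_of_mprojSet_lift_eq_singleton (hS : AbsPermInv S)
    {x : Fin n → ℝ} {Y : Matrix (Fin n) (Fin m) ℝ}
    (hY : mprojSet (lift n m S) (A * rdiag n m x * Bᵀ) = {Y}) :
    ∃ s ∈ vprojSet S x, Y = A * rdiag n m s * Bᵀ := by
  obtain ⟨⟨C, E, hC, hE, y, hy, rfl⟩, hdist⟩ : Y ∈ mprojSet (lift n m S) (A * rdiag n m x * Bᵀ) :=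
    hY ▸ Set.mem_singleton Y
  obtain ⟨σ, e, he, hle⟩ := exists_signed_perm_vnorm_sub_le hnm hA hB hC hE x y
  have hs : (fun i => e i * y (σ i)) ∈ vprojSet S x := by
    refine ⟨hS σ e he y hy, le_antisymm ?_ (vdistSet_le x (hS σ e he y hy))⟩
    rw [← frobDistSet_orthogonal_mul_rdiag_mul_lift hnm hA hB hS, ← hdist]
    exact hle
  have hmem := orthogonal_mul_rdiag_mul_mem_mprojSet_lift hnm hA hB hS hs
  rw [hY] at hmem
  exact ⟨_, hs, hmem.symm⟩

end Lift

theorem lift_normally_flat_singleton_general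
    (n m : ℕ) (hnm : n ≤ m) (L M V U : Set (Fin n → ℝ))
    (hL : AbsPermInv L) (hM : AbsPermInv M) (hU : AbsPermInv U)
    (hflat : ∀ x ∈ V ∩ U, vprojSet L x = ⋃ z ∈ vprojSet M x, vprojSet L z)
    (X : Matrix (Fin n) (Fin m) ℝ) (hX : X ∈ lift n m V ∩ lift n m U)
    (Z W W' : Matrix (Fin n) (Fin m) ℝ)
    (hZ : mprojSet (lift n m M) X = {Z})
    (hW : mprojSet (lift n m L) X = {W})
    (hW' : mprojSet (lift n m L) Z = {W'}) :
    W = W' := by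
  obtain ⟨A, B, hA, hB, x, hxV, rfl⟩ := hX.1
  have hxU : x ∈ U := mem_of_orthogonal_mul_rdiag_mul_mem_lift hnm hA hB hU hX.2
  obtain ⟨z, hz, rfl⟩ := exists_mem_vprojSet_of_mprojSet_lift_eq_singleton hnm hA hB hM hZ
  obtain ⟨w, hw, rfl⟩ := exists_mem_vprojSet_of_mprojSet_lift_eq_singleton hnm hA hB hL hW'
  have hwx : w ∈ vprojSet L x := by
    rw [hflat x ⟨hxV, hxU⟩]
    exact Set.mem_biUnion hz hw
  have hmem := orthogonal_mul_rdiag_mul_mem_mprojSet_lift hnm hA hB hL hwx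
  rw [hW] at hmem
  exact (Set.mem_singleton_iff.1 hmem).symm

/-- **Normal flatness lifts to spectral sets (singleton projections).** -/
theorem lift_normally_flat_singleton
    (n m : ℕ) (hnm : n ≤ m) (L M V U : Set (Fin n → ℝ))
    (hL : AbsPermInv L) (hM : AbsPermInv M) (hV : AbsPermInv V) (hU : AbsPermInv U)
    (hVo : IsOpen V) (hUo : IsOpen U) (hLV : L ⊆ V) (hMU : M ⊆ U)
    (hflat : ∀ x ∈ V ∩ U, vprojSet L x = ⋃ z ∈ vprojSet M x, vprojSet L z)
    (X : Matrix (Fin n) (Fin m) ℝ) (hX : X ∈ lift n m V ∩ lift n m U)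
    (Z W W' : Matrix (Fin n) (Fin m) ℝ)
    (hZ : mprojSet (lift n m M) X = {Z})
    (hW : mprojSet (lift n m L) X = {W})
    (hW' : mprojSet (lift n m L) Z = {W'}) :
    W = W' :=
  lift_normally_flat_singleton_general n m hnm L M V U hL hM hU hflat X hX Z W W' hZ hW hW'
end
end

section
/- Let X = U·D·Vᵀ be a real n×n matrix with U, V orthogonal and D = diag(x) for a vector x ∈ ℝⁿ with x₁ ≥ x₂ ≥ … ≥ xₙ ≥ 0. Let 1 ≤ k ≤ n with x_k > 0, let D_k = diag(x₁,…,x_k,0,…,0), and set Y := U·D_k·Vᵀ. Then Y has rank k and ‖X − Y‖ = d(X, M_k), where M_k := {Z ∈ ℝ^{n×n} : rank Z = k}, ‖·‖ is the Frobenius norm, and d(X, M_k) := inf_{Z∈M_k}‖X − Z‖. -/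
/-!
Orthogonal changes of basis preserve both the rank and the Frobenius norm, so it suffices to
compare `diag x` with a matrix `Z` of rank at most `k`. Let `P` be the orthogonal projection onto
the column space of `Z` and `pⱼ = ‖P eⱼ‖²`. The `j`-th column of `diag x - Z` is `xⱼ eⱼ` minus a
vector of that column space, so its squared norm is at least `xⱼ² (1 - pⱼ)`. The weights `pⱼ` lie
in `[0, 1]` and add up to `rank Z ≤ k`; since `xⱼ²` decreases, comparing every term with the
threshold `x_k²` shows that `∑ xⱼ² (1 - pⱼ)` is smallest when the whole weight sits on the first
`k` indices, where it equals `∑_{j > k} xⱼ² = ‖diag x - D_k‖²`.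
-/

open Matrix

noncomputable section

open Finset
open scoped InnerProductSpace

namespace Matrix

section
variable {m n m' n' R : Type*} [Fintype m] [Fintype n] [Fintype m'] [Fintype n']
  [DecidableEq m'] [DecidableEq n']

theorem sum_sq_eq_trace_transpose_mul [CommSemiring R] (A : Matrix m n R) :
    ∑ i, ∑ j, A i j ^ 2 = (Aᵀ * A).trace := by
  simp only [trace, diag, mul_apply, transpose_apply, sq]
  exact Finset.sum_comm

theorem sum_sq_mul_mul_transpose [CommSemiring R] {U : Matrix m m' R} {V : Matrix n n' R}
    (hU : Uᵀ * U = 1) (hV : Vᵀ * V = 1) (A : Matrix m' n' R) :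
    ∑ i, ∑ j, (U * A * Vᵀ) i j ^ 2 = ∑ i, ∑ j, A i j ^ 2 := by
  have hgram : (U * A * Vᵀ)ᵀ * (U * A * Vᵀ) = V * (Aᵀ * A) * Vᵀ := by
    simp only [transpose_mul, transpose_transpose, Matrix.mul_assoc]
    rw [← Matrix.mul_assoc Uᵀ, hU, Matrix.one_mul]
  rw [sum_sq_eq_trace_transpose_mul, sum_sq_eq_trace_transpose_mul, hgram, trace_mul_cycle,
    ← Matrix.mul_assoc, hV, Matrix.one_mul]

theorem rank_mul_mul_transpose [Field R] {U : Matrix m m' R} {V : Matrix n n' R}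
    (hU : Uᵀ * U = 1) (hV : Vᵀ * V = 1) (A : Matrix m' n' R) :
    (U * A * Vᵀ).rank = A.rank := by
  refine le_antisymm ((rank_mul_le_left _ _).trans (rank_mul_le_right _ _)) ?_
  calc A.rank = (Uᵀ * (U * A * Vᵀ) * V).rank := by
        simp only [Matrix.mul_assoc, hV, Matrix.mul_one]
        rw [← Matrix.mul_assoc, hU, Matrix.one_mul]
    _ ≤ (U * A * Vᵀ).rank := (rank_mul_le_left _ _).trans (rank_mul_le_right _ _)

end

section
variable {m n : Type*} [Fintype m] [Fintype n] [DecidableEq n]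

theorem norm_sq_toEuclideanLin_single (A : Matrix m n ℝ) (j : n) :
    ‖toEuclideanLin A (EuclideanSpace.single j 1)‖ ^ 2 = ∑ i, A i j ^ 2 := by
  simp [EuclideanSpace.norm_sq_eq, toLpLin_apply]

theorem finrank_range_toEuclideanLin (A : Matrix m n ℝ) :
    Module.finrank ℝ (LinearMap.range (toEuclideanLin A)) = A.rank :=
  (rank_eq_finrank_range_toLin A (PiLp.basisFun 2 ℝ m) (PiLp.basisFun 2 ℝ n)).symm

theorem toEuclideanLin_diagonal_single (d : n → ℝ) (j : n) :
    toEuclideanLin (diagonal d) (EuclideanSpace.single j 1) = d j • EuclideanSpace.single j 1 := by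
  ext i
  simp [toLpLin_apply]

end

end Matrix

section
variable {𝕜 ι E : Type*} [RCLike 𝕜] [Fintype ι] [NormedAddCommGroup E] [InnerProductSpace 𝕜 E]

theorem Submodule.norm_sq_sub_norm_sq_starProjection_le (W : Submodule 𝕜 E)
    [W.HasOrthogonalProjection] (v : E) {w : E} (hw : w ∈ W) :
    ‖v‖ ^ 2 - ‖W.starProjection v‖ ^ 2 ≤ ‖v - w‖ ^ 2 := by
  have hmin : ‖v - W.starProjection v‖ ≤ ‖v - w‖ := by
    rw [starProjection_minimal]
    exact ciInf_le ⟨0, Set.forall_mem_range.mpr fun _ => norm_nonneg _⟩ (⟨w, hw⟩ : W)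
  have hpyth := norm_sq_eq_add_norm_sq_starProjection v W
  rw [starProjection_orthogonal_val] at hpyth
  nlinarith [norm_nonneg (v - W.starProjection v)]

theorem OrthonormalBasis.sum_norm_sq_starProjection (b : OrthonormalBasis ι 𝕜 E)
    (W : Submodule 𝕜 E) [FiniteDimensional 𝕜 W] :
    ∑ i, ‖W.starProjection (b i)‖ ^ 2 = Module.finrank 𝕜 W := by
  let c := stdOrthonormalBasis 𝕜 W
  calc ∑ i, ‖W.starProjection (b i)‖ ^ 2 = ∑ i, ∑ s, ‖⟪b i, (c s : E)⟫_𝕜‖ ^ 2 := by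
        refine sum_congr rfl fun i _ => ?_
        rw [Submodule.starProjection_apply, ← Submodule.coe_norm, ← c.sum_sq_norm_inner_right]
        simp [norm_inner_symm]
    _ = ∑ s, ‖(c s : E)‖ ^ 2 := by
        rw [sum_comm]
        exact sum_congr rfl fun s _ => b.sum_sq_norm_inner_right _
    _ = Module.finrank 𝕜 W := by simp [← Submodule.coe_norm, c.orthonormal.1]

end

theorem Finset.sum_mul_le_sum_mul_one_sub_of_threshold {ι : Type*} {A B : Finset ι}
    {c p : ι → ℝ} {γ : ℝ} (hγ : 0 ≤ γ) (hA : ∀ j ∈ A, γ ≤ c j) (hB : ∀ j ∈ B, c j ≤ γ)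
    (hp1 : ∀ j ∈ A, p j ≤ 1) (hp0 : ∀ j ∈ B, 0 ≤ p j)
    (hmass : ∑ j ∈ B, p j ≤ ∑ j ∈ A, (1 - p j)) :
    ∑ j ∈ B, c j * p j ≤ ∑ j ∈ A, c j * (1 - p j) :=
  calc ∑ j ∈ B, c j * p j ≤ ∑ j ∈ B, γ * p j :=
        sum_le_sum fun j hj => mul_le_mul_of_nonneg_right (hB j hj) (hp0 j hj)
    _ ≤ ∑ j ∈ A, γ * (1 - p j) := by
        rw [← mul_sum, ← mul_sum]; exact mul_le_mul_of_nonneg_left hmass hγ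
    _ ≤ ∑ j ∈ A, c j * (1 - p j) :=
        sum_le_sum fun j hj => mul_le_mul_of_nonneg_right (hA j hj) (sub_nonneg.2 (hp1 j hj))

theorem Fin.sum_ite_lt_le_sum_mul_one_sub {n k : ℕ} (hk : 0 < k) (hkn : k ≤ n)
    {c p : Fin n → ℝ} (hc : Antitone c) (hc0 : 0 ≤ c) (hp0 : 0 ≤ p) (hp1 : p ≤ 1)
    (hp : ∑ j, p j ≤ k) :
    ∑ j : Fin n, (if (j : ℕ) < k then 0 else c j) ≤ ∑ j, c j * (1 - p j) := by
  set A : Finset (Fin n) := {j | (j : ℕ) < k}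
  set B : Finset (Fin n) := {j | ¬ (j : ℕ) < k}
  have hsplit (f : Fin n → ℝ) : ∑ j, f j = ∑ j ∈ A, f j + ∑ j ∈ B, f j :=
    (sum_filter_add_sum_filter_not _ _ _).symm
  let m : Fin n := ⟨k - 1, by omega⟩
  have hmass : ∑ j ∈ B, p j ≤ ∑ j ∈ A, (1 - p j) := by
    have hcardA : #A = k := by simp [A, Fin.card_filter_val_lt, hkn]
    rw [sum_sub_distrib, Finset.sum_const, hcardA, nsmul_one]
    linarith [hsplit p]
  have hthreshold := sum_mul_le_sum_mul_one_sub_of_threshold (hc0 m)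
    (fun j hj => hc (show j ≤ m from Nat.le_sub_one_of_lt (mem_filter.1 hj).2))
    (fun j hj => hc (show m ≤ j from (Nat.sub_le k 1).trans (not_lt.1 (mem_filter.1 hj).2)))
    (fun j _ => hp1 j) (fun j _ => hp0 j) hmass
  have hB : ∑ j ∈ B, c j = ∑ j ∈ B, c j * p j + ∑ j ∈ B, c j * (1 - p j) := by
    rw [← sum_add_distrib]; exact sum_congr rfl fun j _ => by ring
  rw [sum_ite, sum_const_zero, zero_add, hsplit fun j => c j * (1 - p j)]
  linarith

theorem rank_diagonal_ite_lt {n k : ℕ} (hkn : k ≤ n) {d : Fin n → ℝ}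
    (hd : ∀ i : Fin n, (i : ℕ) < k → d i ≠ 0) :
    (diagonal fun i : Fin n => if (i : ℕ) < k then d i else 0).rank = k := by
  classical
  rw [rank_diagonal, Fintype.card_subtype]
  convert (Fin.card_filter_val_lt (n := n) (m := k)).trans (min_eq_right hkn) using 3 with i
  by_cases hi : (i : ℕ) < k <;> simp [hi, hd]

theorem frobNorm_mul_mul_transpose {m m' n n' : ℕ} {U : Matrix (Fin m) (Fin m') ℝ}
    {V : Matrix (Fin n) (Fin n') ℝ} (hU : Uᵀ * U = 1) (hV : Vᵀ * V = 1)
    (A : Matrix (Fin m') (Fin n') ℝ) :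
    frobNorm (U * A * Vᵀ) = frobNorm A := by
  rw [frobNorm, frobNorm, sum_sq_mul_mul_transpose hU hV]

theorem frobNorm_diagonal {n : ℕ} (w : Fin n → ℝ) :
    frobNorm (diagonal w) = √(∑ i, w i ^ 2) := by
  rw [frobNorm]
  congr 1
  refine sum_congr rfl fun i _ => ?_
  rw [sum_eq_single i (fun j _ hj => by simp [diagonal_apply_ne _ hj.symm]) (by simp)]
  simp

theorem Matrix.sq_mul_one_sub_norm_sq_starProjection_le_sum_sq {n : Type*} [Fintype n]
    [DecidableEq n] (d : n → ℝ) (Z : Matrix n n ℝ) (j : n) :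
    d j ^ 2 * (1 - ‖(LinearMap.range (toEuclideanLin Z)).starProjection
      (EuclideanSpace.single j 1)‖ ^ 2) ≤ ∑ i, (diagonal d - Z) i j ^ 2 := by
  set W := LinearMap.range (toEuclideanLin Z)
  set e := EuclideanSpace.single j (1 : ℝ)
  calc d j ^ 2 * (1 - ‖W.starProjection e‖ ^ 2)
      = ‖d j • e‖ ^ 2 - ‖W.starProjection (d j • e)‖ ^ 2 := by
        simp only [map_smul, norm_smul, mul_pow, e, PiLp.norm_single, norm_one, Real.norm_eq_abs,
          sq_abs]
        ring
    _ ≤ ‖d j • e - toEuclideanLin Z e‖ ^ 2 :=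
        W.norm_sq_sub_norm_sq_starProjection_le _ (LinearMap.mem_range_self _ e)
    _ = ∑ i, (diagonal d - Z) i j ^ 2 := by
        rw [← toEuclideanLin_diagonal_single, ← LinearMap.sub_apply, ← map_sub,
          norm_sq_toEuclideanLin_single]

theorem frobNorm_diagonal_sub_truncation_le {n k : ℕ} (hk : 0 < k) (hkn : k ≤ n)
    {d : Fin n → ℝ} (hd : Antitone d) (hd0 : 0 ≤ d) {Z : Matrix (Fin n) (Fin n) ℝ}
    (hZ : Z.rank ≤ k) :
    frobNorm (diagonal d - diagonal fun i : Fin n => if (i : ℕ) < k then d i else 0) ≤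
      frobNorm (diagonal d - Z) := by
  let W := LinearMap.range (toEuclideanLin Z)
  let p (j : Fin n) := ‖W.starProjection (EuclideanSpace.single j 1)‖ ^ 2
  have hp1 : p ≤ 1 := fun j =>
    pow_le_one₀ (norm_nonneg _) ((W.norm_starProjection_apply_le _).trans_eq (by simp))
  have hp : ∑ j, p j ≤ k := by
    have hsum := (EuclideanSpace.basisFun (Fin n) ℝ).sum_norm_sq_starProjection W
    simp only [EuclideanSpace.basisFun_apply] at hsum
    simp only [p, hsum]
    exact_mod_cast (finrank_range_toEuclideanLin Z).trans_le hZ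
  rw [diagonal_sub, frobNorm_diagonal, frobNorm]
  refine Real.sqrt_le_sqrt ?_
  calc ∑ i, ((d - fun i : Fin n => if (i : ℕ) < k then d i else 0) i) ^ 2
      = ∑ i : Fin n, (if (i : ℕ) < k then 0 else d i ^ 2) :=
        sum_congr rfl fun i _ => by rw [Pi.sub_apply]; split_ifs <;> simp
    _ ≤ ∑ j, d j ^ 2 * (1 - p j) :=
        Fin.sum_ite_lt_le_sum_mul_one_sub hk hkn
          (fun i j hij => pow_le_pow_left₀ (hd0 j) (hd hij) 2) (fun i => sq_nonneg (d i))
          (fun j => sq_nonneg _) hp1 hp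
    _ ≤ ∑ j, ∑ i, (diagonal d - Z) i j ^ 2 :=
        sum_le_sum fun j _ => sq_mul_one_sub_norm_sq_starProjection_le_sum_sq d Z j
    _ = ∑ i, ∑ j, (diagonal d - Z) i j ^ 2 := sum_comm

/-- **Best rank-`k` approximation via truncated singular values.** -/
theorem truncation_is_nearest_rank_k
    (n : ℕ) (U V : Matrix (Fin n) (Fin n) ℝ) (hU : U * Uᵀ = 1) (hV : V * Vᵀ = 1)
    (x : Fin n → ℝ) (hx : ∀ i j : Fin n, i ≤ j → x j ≤ x i) (hx0 : ∀ i, 0 ≤ x i)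
    (X : Matrix (Fin n) (Fin n) ℝ) (hX : X = U * Matrix.diagonal x * Vᵀ)
    (k : ℕ) (hk1 : 1 ≤ k) (hkn : k ≤ n)
    (hxk : 0 < x ⟨k - 1, by omega⟩)
    (Dk : Matrix (Fin n) (Fin n) ℝ)
    (hDk : Dk = Matrix.diagonal fun i : Fin n => if (i : ℕ) < k then x i else 0) :
    (U * Dk * Vᵀ).rank = k ∧
      frobNorm (X - U * Dk * Vᵀ) =
        frobDistSet X {Z : Matrix (Fin n) (Fin n) ℝ | Z.rank = k} := by
  have hUU : Uᵀ * U = 1 := mul_eq_one_comm.mp hU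
  have hVV : Vᵀ * V = 1 := mul_eq_one_comm.mp hV
  have hx_ne (i : Fin n) (hi : (i : ℕ) < k) : x i ≠ 0 :=
    (hxk.trans_le (hx i _ (Nat.le_sub_one_of_lt hi))).ne'
  have hrank : (U * Dk * Vᵀ).rank = k := by
    rw [rank_mul_mul_transpose hUU hVV, hDk, rank_diagonal_ite_lt hkn hx_ne]
  refine ⟨hrank, Eq.symm ?_⟩
  refine IsLeast.csInf_eq ⟨⟨_, hrank, rfl⟩, ?_⟩
  rintro _ ⟨Z, hZ, rfl⟩
  have hXZ : X - Z = U * (diagonal x - Uᵀ * Z * V) * Vᵀ := by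
    have hconj : U * (Uᵀ * Z * V) * Vᵀ = Z := by
      rw [← Matrix.mul_assoc, ← Matrix.mul_assoc, hU, Matrix.one_mul, Matrix.mul_assoc, hV,
        Matrix.mul_one]
    rw [Matrix.mul_sub, Matrix.sub_mul, hconj, hX]
  calc frobNorm (X - U * Dk * Vᵀ) = frobNorm (diagonal x - Dk) := by
        rw [hX, ← Matrix.sub_mul, ← Matrix.mul_sub, frobNorm_mul_mul_transpose hUU hVV]
    _ ≤ frobNorm (diagonal x - Uᵀ * Z * V) := by
        rw [hDk]
        refine frobNorm_diagonal_sub_truncation_le hk1 hkn (fun i j hij => hx i j hij) hx0 ?_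
        exact (rank_mul_le_left _ _).trans ((rank_mul_le_right _ _).trans hZ.le)
    _ = frobNorm (X - Z) := by rw [hXZ, frobNorm_mul_mul_transpose hUU hVV]

end
end
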